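/- arXiv:1104.0510 — 6 statements merged into one kernel-verified Lean document; each statement's English description precedes it below -/
import Mathlib

section
/- Let G be a k-chromatic graph and u, v distinct vertices of G. Then {u,v} is an implicit-identity of G if and only if there is no independent set S of G with v ∈ S and u ∉ S such that the chromatic number of G − S is less than k. -/
/-!
If `c u ≠ c v` for a `k`-coloring `c`, the color class of `v` is an independent set containing `v`
but not `u` whose removal leaves a graph colored by the other `k - 1` colors. Conversely, an
independent set `S ∋ v` with `u ∉ S` and `χ(G - S) ≤ k - 1` gives a `k`-coloring in which `S`
receives a color of its own, separating `u` from `v`.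
-/

namespace SimpleGraph

variable {V α : Type*} {G : SimpleGraph V}

open Classical in
noncomputable def Coloring.extendOfIsIndepSet {S : Set V} (hS : G.IsIndepSet S)
    (c : (G.induce Sᶜ).Coloring α) : G.Coloring (Option α) :=
  Coloring.mk (fun w ↦ if h : w ∈ S then none else some (c ⟨w, h⟩)) fun {a b} hab ↦ by
    by_cases ha : a ∈ S <;> by_cases hb : b ∈ S
    · exact absurd hab (hS ha hb (G.ne_of_adj hab))
    · simp [ha, hb]
    · simp [ha, hb]
    · simpa [ha, hb] using c.valid (show (G.induce Sᶜ).Adj ⟨a, ha⟩ ⟨b, hb⟩ from hab)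

open Classical in
theorem Coloring.extendOfIsIndepSet_eq_none_iff {S : Set V} (hS : G.IsIndepSet S)
    (c : (G.induce Sᶜ).Coloring α) {w : V} : c.extendOfIsIndepSet hS w = none ↔ w ∈ S := by
  change (if h : w ∈ S then none else some (c ⟨w, h⟩)) = none ↔ w ∈ S
  by_cases hw : w ∈ S <;> simp [hw]

theorem exists_coloring_ne_of_isIndepSet {S : Set V} (hS : G.IsIndepSet S) {u v : V}
    (hu : u ∉ S) (hv : v ∈ S) {k : ℕ} (hlt : (G.induce Sᶜ).chromaticNumber < k) :
    ∃ c : G.Coloring (Fin k), c u ≠ c v := by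
  obtain ⟨n, rfl⟩ : ∃ n, k = n + 1 := Nat.exists_eq_add_one_of_ne_zero (by rintro rfl; simp at hlt)
  obtain ⟨c⟩ : (G.induce Sᶜ).Colorable n := by
    rw [← chromaticNumber_le_iff_colorable, ← ENat.lt_add_one_iff (ENat.natCast_ne_top n)]
    exact_mod_cast hlt
  let c' := G.recolorOfEquiv (finSuccEquiv n).symm (c.extendOfIsIndepSet hS)
  refine ⟨c', fun h ↦ hu ?_⟩
  rw [← c.extendOfIsIndepSet_eq_none_iff hS] at hv ⊢
  rw [← hv]
  exact (finSuccEquiv n).symm.injective h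

theorem chromaticNumber_induce_compl_colorClass_lt [Fintype α] (c : G.Coloring α) (a : α) :
    (G.induce (c.colorClass a)ᶜ).chromaticNumber < Fintype.card α := by
  classical
  let c' : (G.induce (c.colorClass a)ᶜ).Coloring {x // x ≠ a} :=
    Coloring.mk (fun w ↦ ⟨c w, w.2⟩) fun hab h ↦ c.valid hab (congrArg Subtype.val h)
  calc (G.induce (c.colorClass a)ᶜ).chromaticNumber ≤ Fintype.card {x // x ≠ a} :=
        c'.colorable.chromaticNumber_le
    _ = (Fintype.card α - 1 : ℕ) := by simp [Fintype.card_subtype_compl]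
    _ < Fintype.card α := by exact_mod_cast Nat.sub_lt (Fintype.card_pos_iff.mpr ⟨a⟩) one_pos

end SimpleGraph

theorem implicit_identity_iff_no_critical_indep_set_general {V : Type*}
    (G : SimpleGraph V) (k : ℕ)
    (u v : V) :
    (∀ c : G.Coloring (Fin k), c u = c v) ↔
      ¬ ∃ S : Set V, (∀ a ∈ S, ∀ b ∈ S, ¬ G.Adj a b) ∧ v ∈ S ∧ u ∉ S ∧
        (G.induce Sᶜ).chromaticNumber < (k : ℕ∞) := by
  constructor
  · rintro hcol ⟨S, hS, hv, hu, hlt⟩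
    obtain ⟨c, hc⟩ :=
      SimpleGraph.exists_coloring_ne_of_isIndepSet (fun a ha b hb _ ↦ hS a ha b hb) hu hv hlt
    exact hc (hcol c)
  · intro hno c
    by_contra hne
    refine hno ⟨c.colorClass (c v), fun a ha b hb ↦ c.not_adj_of_mem_colorClass ha hb, rfl, hne, ?_⟩
    simpa using SimpleGraph.chromaticNumber_induce_compl_colorClass_lt c (c v)

/-- In a `k`-chromatic graph `G` with `u ≠ v`, `{u,v}` is an
implicit-identity iff there is no independent set `S` with `v ∈ S`, `u ∉ S` and
`χ(G - S) < k`. -/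
theorem implicit_identity_iff_no_critical_indep_set {V : Type*} [Fintype V]
    (G : SimpleGraph V) (k : ℕ) (hk : G.chromaticNumber = k)
    (u v : V) (huv : u ≠ v) :
    (∀ c : G.Coloring (Fin k), c u = c v) ↔
      ¬ ∃ S : Set V, (∀ a ∈ S, ∀ b ∈ S, ¬ G.Adj a b) ∧ v ∈ S ∧ u ∉ S ∧
        (G.induce Sᶜ).chromaticNumber < (k : ℕ∞) :=
  implicit_identity_iff_no_critical_indep_set_general G k u v
end

section
/- Let G be a k-chromatic graph, {u,v} an implicit-relation (edge or identity), and let S₁, …, Sℓ (0 ≤ ℓ ≤ k−2) be a sequence of sets such that each Sᵢ is a critical independent set avoiding u and v of the graph G − S₁ − ⋯ − S_{i−1}. Then {u,v} has the same implicit-relation in H = G − S₁ − ⋯ − Sℓ, which is (k−ℓ)-chromatic. -/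
/-!
Color the vertices of each removed set `Sᵢ` with a fresh color `k - ℓ + i`: since every `Sᵢ` is
independent, this extends any `(k - ℓ)`-coloring of `H` to a `k`-coloring of `G` that agrees with
it on `H`. Hence an implicit edge or identity `{u, v}` of `G` forces the same relation on `u, v` in
every `(k - ℓ)`-coloring of `H`.
-/

namespace SimpleGraph

variable {V α ι : Type*} {G : SimpleGraph V}

theorem Coloring.exists_extend_of_isIndepSet {W : Set V} {S : ι → Set V}
    (hS : ∀ i, G.IsIndepSet (S i)) (hcover : ∀ x ∉ W, ∃ i, x ∈ S i)
    (c : (G.induce W).Coloring α) :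
    ∃ c' : G.Coloring (α ⊕ ι), ∀ x (hx : x ∈ W), c' x = .inl (c ⟨x, hx⟩) := by
  classical
  let f : V → α ⊕ ι := fun x =>
    if hx : x ∈ W then .inl (c ⟨x, hx⟩) else .inr (hcover x hx).choose
  refine ⟨Coloring.mk f fun {a b} hab => ?_, fun x hx => dif_pos hx⟩
  by_cases ha : a ∈ W <;> by_cases hb : b ∈ W <;> simp only [f, ha, hb, dite_true, dite_false]
  · exact fun h => c.valid (show (G.induce W).Adj ⟨a, ha⟩ ⟨b, hb⟩ from hab) (Sum.inl_injective h)
  · exact Sum.inl_ne_inr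
  · exact Sum.inr_ne_inl
  · intro h
    have hbS := (hcover b hb).choose_spec
    rw [← Sum.inr_injective h] at hbS
    exact hS _ (hcover a ha).choose_spec hbS hab.ne hab

theorem Coloring.exists_extend_fin_of_isIndepSet {k ℓ : ℕ} (hℓk : ℓ ≤ k) (S : ℕ → Set V)
    (hS : ∀ i < ℓ, G.IsIndepSet (S i))
    (c : (G.induce {x | ∀ j < ℓ, x ∉ S j}).Coloring (Fin (k - ℓ))) :
    ∃ c' : G.Coloring (Fin k), ∀ x (hx : x ∈ {x | ∀ j < ℓ, x ∉ S j}),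
      c' x = Fin.castLE (k.sub_le ℓ) (c ⟨x, hx⟩) := by
  have hcover : ∀ x ∉ {x | ∀ j < ℓ, x ∉ S j}, ∃ i : Fin ℓ, x ∈ S i := by
    intro x hx
    obtain ⟨j, hj, hxj⟩ : ∃ j < ℓ, x ∈ S j := by simpa using hx
    exact ⟨⟨j, hj⟩, hxj⟩
  obtain ⟨c', hc'⟩ := exists_extend_of_isIndepSet (fun i : Fin ℓ => hS i i.isLt) hcover c
  let recolor : Fin (k - ℓ) ⊕ Fin ℓ ≃ Fin k :=
    finSumFinEquiv.trans (finCongr (Nat.sub_add_cancel hℓk))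
  refine ⟨G.recolorOfEmbedding recolor.toEmbedding c', fun x hx => ?_⟩
  ext
  simp [recolor, hc' x hx]

end SimpleGraph

theorem implicit_relation_invariant_iterated_general {V : Type*}
    (G : SimpleGraph V) (k ℓ : ℕ) (hℓ : ℓ ≤ k - 2) (hk : G.chromaticNumber = k)
    (u v : V) (S : ℕ → Set V)
    (hindep : ∀ i < ℓ, ∀ a ∈ S i, ∀ b ∈ S i, ¬ G.Adj a b)
    (hcrit : ∀ i < ℓ,
      (G.induce {x | ∀ j < i + 1, x ∉ S j}).chromaticNumber = ((k - (i + 1) : ℕ) : ℕ∞)) :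
    (G.induce {x | ∀ j < ℓ, x ∉ S j}).chromaticNumber = ((k - ℓ : ℕ) : ℕ∞) ∧
    ∀ (hu' : u ∈ {x | ∀ j < ℓ, x ∉ S j}) (hv' : v ∈ {x | ∀ j < ℓ, x ∉ S j}),
      ((∀ c : G.Coloring (Fin k), c u ≠ c v) →
        ∀ c : (G.induce {x | ∀ j < ℓ, x ∉ S j}).Coloring (Fin (k - ℓ)),
          c ⟨u, hu'⟩ ≠ c ⟨v, hv'⟩) ∧
      ((∀ c : G.Coloring (Fin k), c u = c v) →
        ∀ c : (G.induce {x | ∀ j < ℓ, x ∉ S j}).Coloring (Fin (k - ℓ)),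
          c ⟨u, hu'⟩ = c ⟨v, hv'⟩) := by
  have extend :=
    SimpleGraph.Coloring.exists_extend_fin_of_isIndepSet (le_trans hℓ (k.sub_le 2)) S
      fun i hi a ha b hb _ => hindep i hi a ha b hb
  refine ⟨?_, fun hu' hv' => ⟨fun hne c hc => ?_, fun heq c => ?_⟩⟩
  · cases ℓ with
    | zero =>
      have huniv : {x : V | ∀ j < 0, x ∉ S j} = Set.univ := by simp
      rw [huniv, SimpleGraph.chromaticNumber_congr G.induceUnivIso, hk, Nat.sub_zero]
    | succ m => exact hcrit m m.lt_succ_self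
  · obtain ⟨c', hc'⟩ := extend c
    exact hne c' (by rw [hc' u hu', hc' v hv', hc])
  · obtain ⟨c', hc'⟩ := extend c
    exact Fin.castLE_injective _ (by rw [← hc' u hu', ← hc' v hv']; exact heq c')

/-- Removing a sequence of critical independent sets `S 0, …, S (ℓ-1)`
(each avoiding `u` and `v`, and critical for the graph left at that stage) from a
`k`-chromatic graph `G` preserves the implicit-relation (edge or identity) on
`{u,v}`, and the resulting graph `H` is `(k-ℓ)`-chromatic. -/
theorem implicit_relation_invariant_iterated {V : Type*} [Fintype V]
    (G : SimpleGraph V) (k ℓ : ℕ) (hℓ : ℓ ≤ k - 2) (hk : G.chromaticNumber = k)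
    (u v : V) (S : ℕ → Set V)
    (hindep : ∀ i < ℓ, ∀ a ∈ S i, ∀ b ∈ S i, ¬ G.Adj a b)
    (hu : ∀ i < ℓ, u ∉ S i) (hv : ∀ i < ℓ, v ∉ S i)
    (hcrit : ∀ i < ℓ,
      (G.induce {x | ∀ j < i + 1, x ∉ S j}).chromaticNumber = ((k - (i + 1) : ℕ) : ℕ∞)) :
    (G.induce {x | ∀ j < ℓ, x ∉ S j}).chromaticNumber = ((k - ℓ : ℕ) : ℕ∞) ∧
    ∀ (hu' : u ∈ {x | ∀ j < ℓ, x ∉ S j}) (hv' : v ∈ {x | ∀ j < ℓ, x ∉ S j}),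
      ((∀ c : G.Coloring (Fin k), c u ≠ c v) →
        ∀ c : (G.induce {x | ∀ j < ℓ, x ∉ S j}).Coloring (Fin (k - ℓ)),
          c ⟨u, hu'⟩ ≠ c ⟨v, hv'⟩) ∧
      ((∀ c : G.Coloring (Fin k), c u = c v) →
        ∀ c : (G.induce {x | ∀ j < ℓ, x ∉ S j}).Coloring (Fin (k - ℓ)),
          c ⟨u, hu'⟩ = c ⟨v, hv'⟩) :=
  implicit_relation_invariant_iterated_general G k ℓ hℓ hk u v S hindep hcrit
end

section
/- Let G be a k-chromatic graph with implicit-edge {u,v} (u,v nonadjacent). Then in every proper k-coloring c of G, the vertices u and v lie in the same connected component of the subgraph of G induced by the vertices colored c(u) or c(v) (i.e., there is a Kempe chain in colors c(u), c(v) containing both u and v). -/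
namespace SimpleGraph.Coloring

variable {V α : Type*} {G : SimpleGraph V}

/-- The component of `x` in the subgraph induced on the vertices colored `a` or `b`; empty if `x`
itself has neither color. -/
def kempeChain (c : G.Coloring α) (a b : α) (x : V) : Set V :=
  {y | ∃ (hx : c x = a ∨ c x = b) (hy : c y = a ∨ c y = b),
    (G.induce {z | c z = a ∨ c z = b}).Reachable ⟨x, hx⟩ ⟨y, hy⟩}

lemma self_mem_kempeChain (c : G.Coloring α) {a b : α} {x : V} (hx : c x = a ∨ c x = b) :
    x ∈ c.kempeChain a b x :=
  ⟨hx, hx, .rfl⟩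

lemma mem_kempeChain_of_adj (c : G.Coloring α) {a b : α} {x y z : V}
    (hy : y ∈ c.kempeChain a b x) (hyz : G.Adj y z) (hz : c z = a ∨ c z = b) :
    z ∈ c.kempeChain a b x := by
  obtain ⟨hx, hy, hxy⟩ := hy
  exact ⟨hx, hz, hxy.trans (induce_adj.mpr hyz).reachable⟩

section swapColorsOn

variable [DecidableEq α]

def swapColorsOn (c : G.Coloring α) (a b : α) (K : Set V) [DecidablePred (· ∈ K)]
    (hK : ∀ x y, x ∈ K → G.Adj x y → c y = a ∨ c y = b → y ∈ K) : G.Coloring α :=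
  Coloring.mk (fun x => if x ∈ K then Equiv.swap a b (c x) else c x) fun {x y} hxy => by
    have boundary : ∀ x y, x ∈ K → y ∉ K → G.Adj x y → Equiv.swap a b (c x) ≠ c y := by
      intro x y hx hy hxy hswap
      have hya : c y ≠ a := fun h => hy (hK x y hx hxy (.inl h))
      have hyb : c y ≠ b := fun h => hy (hK x y hx hxy (.inr h))
      -- `swap a b` is an involution fixing `c y`
      refine c.valid hxy ?_
      rw [← Equiv.swap_apply_of_ne_of_ne hya hyb, ← hswap, Equiv.swap_apply_self]
    by_cases hx : x ∈ K <;> by_cases hy : y ∈ K <;> simp only [hx, hy, if_true, if_false]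
    · exact (Equiv.injective _).ne (c.valid hxy)
    · exact boundary x y hx hy hxy
    · exact (boundary y x hy hx hxy.symm).symm
    · exact c.valid hxy

lemma swapColorsOn_apply_of_mem (c : G.Coloring α) (a b : α) {K : Set V} [DecidablePred (· ∈ K)]
    (hK : ∀ x y, x ∈ K → G.Adj x y → c y = a ∨ c y = b → y ∈ K) {x : V} (hx : x ∈ K) :
    c.swapColorsOn a b K hK x = Equiv.swap a b (c x) :=
  if_pos hx

lemma swapColorsOn_apply_of_notMem (c : G.Coloring α) (a b : α) {K : Set V}
    [DecidablePred (· ∈ K)] (hK : ∀ x y, x ∈ K → G.Adj x y → c y = a ∨ c y = b → y ∈ K)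
    {x : V} (hx : x ∉ K) : c.swapColorsOn a b K hK x = c x :=
  if_neg hx

end swapColorsOn

lemma exists_apply_eq_of_notMem_kempeChain (c : G.Coloring α) {u v : V}
    (hv : v ∉ c.kempeChain (c u) (c v) u) : ∃ c' : G.Coloring α, c' u = c' v := by
  classical
  let c' := c.swapColorsOn (c u) (c v) (c.kempeChain (c u) (c v) u)
    fun _ _ hx hxy hy => c.mem_kempeChain_of_adj hx hxy hy
  refine ⟨c', ?_⟩
  rw [swapColorsOn_apply_of_mem _ _ _ _ (c.self_mem_kempeChain (.inl rfl)),
    swapColorsOn_apply_of_notMem _ _ _ _ hv, Equiv.swap_apply_left]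

end SimpleGraph.Coloring

theorem implicit_edge_kempe_chain_general {V : Type*}
    (G : SimpleGraph V) (k : ℕ)
    (u v : V)
    (hie : ∀ c : G.Coloring (Fin k), c u ≠ c v) :
    ∀ c : G.Coloring (Fin k),
      (G.induce {x | c x = c u ∨ c x = c v}).Reachable
        ⟨u, Or.inl rfl⟩ ⟨v, Or.inr rfl⟩ := by
  intro c
  by_contra hreach
  obtain ⟨c', hc'⟩ := c.exists_apply_eq_of_notMem_kempeChain (v := v) fun ⟨_, _, h⟩ => hreach h
  exact hie c' hc'

/-- If `{u,v}` is an implicit-edge of a `k`-chromatic graph `G`, then in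
every proper `k`-coloring `c` of `G` there is a Kempe chain in the colors
`c u, c v` containing both `u` and `v`: `u` and `v` are connected in the subgraph
induced on the vertices colored `c u` or `c v`. -/
theorem implicit_edge_kempe_chain {V : Type*} [Fintype V]
    (G : SimpleGraph V) (k : ℕ) (hk : G.chromaticNumber = k)
    (u v : V) (huv : ¬ G.Adj u v)
    (hie : ∀ c : G.Coloring (Fin k), c u ≠ c v) :
    ∀ c : G.Coloring (Fin k),
      (G.induce {x | c x = c u ∨ c x = c v}).Reachable
        ⟨u, Or.inl rfl⟩ ⟨v, Or.inr rfl⟩ :=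
  implicit_edge_kempe_chain_general G k u v hie
end

section
/- Let G be a k-chromatic graph and w a critical vertex of G (i.e., χ(G − w) < k). If {u,v} is an implicit-identity of G with w ∉ {u,v}, then w is adjacent to both u and v. -/
/-!
If `w` were not adjacent to `u`, then `{w, u}` would be independent: take a `(k-1)`-coloring of
`G - w`, give `w` and `u` a fresh `k`-th color and keep the old colors elsewhere. This is a
proper `k`-coloring of `G` in which `u` and `v` get different colors.
-/

namespace SimpleGraph

variable {V α : Type*} {G : SimpleGraph V}

open Classical in
/-- All of `t` gets the fresh color `none`. -/
noncomputable def Coloring.extendByIndepSet {s t : Set V} (c : (G.induce s).Coloring α)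
    (ht : G.IsIndepSet t) (hst : sᶜ ⊆ t) : G.Coloring (Option α) :=
  Coloring.mk
    (fun x => if hx : x ∈ t then none else some (c ⟨x, not_imp_comm.1 (@hst x) hx⟩))
    (by
      intro a b hab
      by_cases ha : a ∈ t <;> by_cases hb : b ∈ t <;> simp only [ha, hb, dite_true, dite_false]
      · exact fun _ => ht ha hb (G.ne_of_adj hab) hab
      · exact (Option.some_ne_none _).symm
      · exact Option.some_ne_none _
      · exact fun h => c.valid (v := ⟨a, _⟩) (w := ⟨b, _⟩) hab (Option.some_injective _ h))

theorem Coloring.extendByIndepSet_eq_none_iff {s t : Set V} (c : (G.induce s).Coloring α)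
    (ht : G.IsIndepSet t) (hst : sᶜ ⊆ t) {x : V} :
    c.extendByIndepSet ht hst x = none ↔ x ∈ t := by
  by_cases hx : x ∈ t <;> simp [extendByIndepSet, Coloring.mk, hx]

theorem adj_of_forall_coloring_eq {n : ℕ} {w u v : V} (hcol : (G.induce {x | x ≠ w}).Colorable n)
    (hwv : w ≠ v) (huv : u ≠ v) (hii : ∀ c : G.Coloring (Fin (n + 1)), c u = c v) :
    G.Adj w u := by
  by_contra hnadj
  obtain ⟨c⟩ := hcol
  have hind : G.IsIndepSet {w, u} :=
    Set.pairwise_pair.mpr fun _ => ⟨hnadj, fun h => hnadj h.symm⟩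
  have hsub : {x | x ≠ w}ᶜ ⊆ {w, u} := by intro x; simp +contextual
  let c' := c.extendByIndepSet hind hsub
  have hc' : c' u = c' v :=
    (finSuccEquiv n).symm.injective (hii (G.recolorOfEquiv (finSuccEquiv n).symm c'))
  have hu : c' u = none := (c.extendByIndepSet_eq_none_iff hind hsub).mpr (by simp)
  have hv : c' v ≠ none := by
    rw [Ne, c.extendByIndepSet_eq_none_iff hind hsub]
    simp [hwv.symm, huv.symm]
  exact hv (hc' ▸ hu)

end SimpleGraph

theorem critical_vertex_adj_implicit_identity_general {V : Type*}
    (G : SimpleGraph V) (k : ℕ)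
    (w : V) (hw : (G.induce {x | x ≠ w}).chromaticNumber < (k : ℕ∞))
    (u v : V) (hne : u ≠ v) (hwu : w ≠ u) (hwv : w ≠ v)
    (hii : ∀ c : G.Coloring (Fin k), c u = c v) :
    G.Adj w u ∧ G.Adj w v := by
  obtain ⟨n, rfl⟩ : ∃ n, k = n + 1 :=
    Nat.exists_eq_add_one.mpr (Nat.pos_of_ne_zero (by rintro rfl; simp at hw))
  have hcol : (G.induce {x | x ≠ w}).Colorable n := by
    rw [← SimpleGraph.chromaticNumber_le_iff_colorable, ← ENat.lt_natCast_add_one_iff]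
    exact_mod_cast hw
  exact ⟨SimpleGraph.adj_of_forall_coloring_eq hcol hwv hne hii,
    SimpleGraph.adj_of_forall_coloring_eq hcol hwu hne.symm fun c => (hii c).symm⟩

/-- If `w` is a critical vertex of a `k`-chromatic graph `G` and
`{u,v}` is an implicit-identity of `G` with `w ∉ {u,v}`, then `w` is adjacent to
both `u` and `v`. -/
theorem critical_vertex_adj_implicit_identity {V : Type*} [Fintype V]
    (G : SimpleGraph V) (k : ℕ) (hk : G.chromaticNumber = k)
    (w : V) (hw : (G.induce {x | x ≠ w}).chromaticNumber < (k : ℕ∞))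
    (u v : V) (hne : u ≠ v) (hwu : w ≠ u) (hwv : w ≠ v)
    (hii : ∀ c : G.Coloring (Fin k), c u = c v) :
    G.Adj w u ∧ G.Adj w v :=
  critical_vertex_adj_implicit_identity_general G k w hw u v hne hwu hwv hii
end

section
/- Let G be a k-chromatic double-critical graph. Then for every edge uv of G, the vertices u and v have at least k − 2 common neighbors, i.e., |N(u) ∩ N(v)| ≥ k − 2. -/
/-!
If fewer than `k - 2` vertices were adjacent to both `u` and `v`, some colour of a
`(k - 2)`-colouring of `G - u - v` would miss all of them, and recolouring around the edge `uv`
with one extra colour would give a `(k - 1)`-colouring of `G`.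
-/

theorem Set.exists_notMem_image_of_encard_lt {α β : Type*} (f : β → α) {T : Set β}
    (h : T.encard < ENat.card α) : ∃ i, i ∉ f '' T := by
  by_contra! hall
  have himage : f '' T = univ := eq_univ_of_forall hall
  exact h.not_ge (by simpa [himage] using encard_image_le f T)

namespace SimpleGraph

variable {V α : Type*} {G : SimpleGraph V} {u v : V}

open Classical in
/-- `u` takes colour `i`, which is thereby freed in its neighbourhood; the new colour `none` goes to
`v` and to the `i`-coloured neighbours of `u`, a class that is independent because `i` misses the
common neighbours of `u` and `v`. -/
noncomputable def Coloring.extendAcrossEdge (C : (G.induce {x | x ≠ u ∧ x ≠ v}).Coloring α)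
    (i : α) (hi : ∀ x : {x | x ≠ u ∧ x ≠ v}, x.1 ∈ G.commonNeighbors u v → C x ≠ i) :
    G.Coloring (Option α) :=
  Coloring.mk
    (fun x => if hx : x ≠ u ∧ x ≠ v then
        if G.Adj u x ∧ C ⟨x, hx⟩ = i then none else some (C ⟨x, hx⟩)
      else if x = u then some i else none)
    (by
      intro x y hxy
      have hC : ∀ (hx : x ≠ u ∧ x ≠ v) (hy : y ≠ u ∧ y ≠ v), C ⟨x, hx⟩ ≠ C ⟨y, hy⟩ :=
        fun _ _ => C.valid hxy
      have hi_common : ∀ w (hw : w ≠ u ∧ w ≠ v), G.Adj u w → G.Adj v w → C ⟨w, hw⟩ ≠ i :=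
        fun w hw hu hv => hi ⟨w, hw⟩ ⟨hu, hv⟩
      have hxy_ne := hxy.ne
      split_ifs <;> grind [G.adj_symm])

theorem Colorable.succ_of_encard_commonNeighbors_lt {m : ℕ}
    (hcol : (G.induce {x | x ≠ u ∧ x ≠ v}).Colorable m)
    (hlt : (G.commonNeighbors u v).encard < m) : G.Colorable (m + 1) := by
  obtain ⟨C⟩ := hcol
  obtain ⟨i, hi⟩ := Set.exists_notMem_image_of_encard_lt C
    (T := Subtype.val ⁻¹' G.commonNeighbors u v)
    ((Set.encard_preimage_val_le_encard_right _ _).trans_lt (by simpa using hlt))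
  simpa using (C.extendAcrossEdge i fun x hx hCx => hi ⟨x, hx, hCx⟩).colorable

end SimpleGraph

theorem double_critical_common_neighbors_general {V : Type*} [Fintype V]
    (G : SimpleGraph V) (k : ℕ)
    (hk : G.chromaticNumber = k)
    (hdc : ∀ u v : V, G.Adj u v →
      (G.induce {x | x ≠ u ∧ x ≠ v}).chromaticNumber = ((k - 2 : ℕ) : ℕ∞)) :
    ∀ u v : V, G.Adj u v → k - 2 ≤ (G.neighborSet u ∩ G.neighborSet v).ncard := by
  intro u v huv
  by_contra! hlt
  have hcol : (G.induce {x | x ≠ u ∧ x ≠ v}).Colorable (k - 2) :=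
    SimpleGraph.chromaticNumber_le_iff_colorable.mp (hdc u v huv).le
  have hcommon : (G.commonNeighbors u v).encard < (k - 2 : ℕ) := by
    rw [← (Set.toFinite _).cast_ncard_eq]
    exact_mod_cast hlt
  have hle := (hcol.succ_of_encard_commonNeighbors_lt hcommon).chromaticNumber_le
  rw [hk, Nat.cast_le] at hle
  omega

/-- In a `k`-chromatic double-critical graph `G`, the endpoints of any
edge have at least `k - 2` common neighbors. -/
theorem double_critical_common_neighbors {V : Type*} [Fintype V]
    (G : SimpleGraph V) (k : ℕ) (hconn : G.Connected)
    (hk : G.chromaticNumber = k)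
    (hdc : ∀ u v : V, G.Adj u v →
      (G.induce {x | x ≠ u ∧ x ≠ v}).chromaticNumber = ((k - 2 : ℕ) : ℕ∞)) :
    ∀ u v : V, G.Adj u v → k - 2 ≤ (G.neighborSet u ∩ G.neighborSet v).ncard :=
  double_critical_common_neighbors_general G k hk hdc
end

section
/- There exists a 5-chromatic planar graph if and only if there exists a 4-chromatic planar graph G with nonadjacent vertices u,v forming an implicit-edge such that the graph obtained by identifying u and v is planar. -/
/-- `G` has an `H`-minor: there is a family of nonempty, connected, pairwise
disjoint branch sets in `G`, one for each vertex of `H`, with an edge of `G`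
between the branch sets of any two adjacent vertices of `H`. -/
def SimpleGraph.HasMinor {V W : Type*} (G : SimpleGraph V) (H : SimpleGraph W) : Prop :=
  ∃ B : W → Set V,
    (∀ w, (B w).Nonempty) ∧
    (∀ w, (G.induce (B w)).Connected) ∧
    (Pairwise fun w₁ w₂ => Disjoint (B w₁) (B w₂)) ∧
    (∀ w₁ w₂, H.Adj w₁ w₂ → ∃ a ∈ B w₁, ∃ b ∈ B w₂, G.Adj a b)

/-- Planarity, via Wagner's characterization: no `K₅` minor and no `K₃,₃` minor. -/
def SimpleGraph.Planar {V : Type*} (G : SimpleGraph V) : Prop :=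
  ¬ G.HasMinor (⊤ : SimpleGraph (Fin 5)) ∧
  ¬ G.HasMinor (completeBipartiteGraph (Fin 3) (Fin 3))

/-- Vertex identification `G/u,v`: the vertices `u` and `v` are replaced by a single
vertex (represented by `v`) adjacent to `N(u) ∪ N(v)`. -/
def SimpleGraph.identify {V : Type*} (G : SimpleGraph V) (u v : V) :
    SimpleGraph {x : V // x ≠ u} where
  Adj a b := a ≠ b ∧
    (G.Adj a b ∨ ((a : V) = v ∧ G.Adj u b) ∨ ((b : V) = v ∧ G.Adj u a))
  symm := by
    constructor
    rintro a b ⟨hab, h | ⟨ha, hb⟩ | ⟨hb, ha⟩⟩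
    · exact ⟨hab.symm, Or.inl h.symm⟩
    · exact ⟨hab.symm, Or.inr (Or.inr ⟨ha, hb⟩)⟩
    · exact ⟨hab.symm, Or.inr (Or.inl ⟨hb, ha⟩)⟩
  loopless := by constructor; rintro a ⟨h, -⟩; exact h rfl

/-!
Backward direction: a 4-coloring of `G/u,v` pulls back to a 4-coloring of `G` that gives `u` and
`v` the same color, so `G/u,v` is not 4-colorable, while a fifth color on the merged vertex
5-colors it.

Forward direction: a planar 5-chromatic graph contains a subgraph `G` that is not 4-colorable but
has an edge `xy` with `G - xy` 4-colorable; every 4-coloring of `G - xy` then agrees on `x` and `y`.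
Attach a pendant vertex `w` to `x` in `G - xy`. The result is still planar (a pendant vertex
creates no `K₅` or `K₃,₃` minor, as every vertex of these has degree at least 2) and 4-chromatic,
`w` and `y` get different colors in every 4-coloring since `w` differs from `x`, and identifying
`w` with `y` gives back `G`.
-/

namespace SimpleGraph

variable {V V' W : Type*}

lemma Connected.of_surjective_of_adj_or_eq {G : SimpleGraph V} {H : SimpleGraph V'}
    (f : V → V') (hf : Function.Surjective f)
    (hadj : ∀ ⦃a b⦄, G.Adj a b → f a = f b ∨ H.Adj (f a) (f b))
    (hG : G.Connected) : H.Connected := by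
  have : Nonempty V' := hG.nonempty.map f
  refine ⟨hf.forall₂.2 fun a b => ?_⟩
  rw [reachable_iff_reflTransGen]
  refine Relation.ReflTransGen.lift' f (fun a b hab => ?_) _ _
    ((reachable_iff_reflTransGen a b).1 (hG a b))
  rcases hadj hab with h | h
  · exact (h ▸ .refl : Relation.ReflTransGen H.Adj (f a) (f b))
  · exact Relation.ReflTransGen.single h

lemma HasMinor.of_isContained {G : SimpleGraph V} {G' : SimpleGraph V'} {K : SimpleGraph W}
    (h : G.HasMinor K) (hGG' : G ⊑ G') : G'.HasMinor K := by
  obtain ⟨f⟩ := hGG'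
  obtain ⟨B, hne, hconn, hdisj, hedge⟩ := h
  refine ⟨fun w => f '' B w, fun w => (hne w).image f, fun w => ?_,
    fun w₁ w₂ h => (Set.disjoint_image_iff f.injective).2 (hdisj h), fun w₁ w₂ h => ?_⟩
  · let g : G.induce (B w) →g G'.induce (f '' B w) :=
      ⟨fun a => ⟨f a, Set.mem_image_of_mem f a.2⟩, fun h => f.toHom.map_adj h⟩
    exact (hconn w).map g fun ⟨_, a, ha, rfl⟩ => ⟨⟨a, ha⟩, rfl⟩
  · obtain ⟨a, ha, b, hb, hab⟩ := hedge w₁ w₂ h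
    exact ⟨f a, Set.mem_image_of_mem f ha, f b, Set.mem_image_of_mem f hb,
      f.toHom.map_adj hab⟩

lemma Planar.of_isContained {G : SimpleGraph V} {G' : SimpleGraph V'} (h : G'.Planar)
    (hGG' : G ⊑ G') : G.Planar :=
  ⟨fun hK => h.1 (hK.of_isContained hGG'), fun hK => h.2 (hK.of_isContained hGG')⟩

def addPendant (G : SimpleGraph V) (x : V) : SimpleGraph (Option V) where
  Adj
    | some a, some b => G.Adj a b
    | none, some b => b = x
    | some a, none => a = x
    | none, none => False
  symm := by
    constructor
    rintro (_ | a) (_ | b) h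
    exacts [h, h, h, h.symm]
  loopless := by
    constructor
    rintro (_ | a) h
    exacts [h, G.irrefl h]

variable {G : SimpleGraph V} {x : V}

@[simp] lemma addPendant_adj_some_some {a b : V} :
    (G.addPendant x).Adj (some a) (some b) ↔ G.Adj a b :=
  Iff.rfl

@[simp] lemma addPendant_adj_none_left {b : Option V} :
    (G.addPendant x).Adj none b ↔ b = some x := by
  cases b <;> simp [addPendant]

@[simp] lemma addPendant_adj_none_right {a : Option V} :
    (G.addPendant x).Adj a none ↔ a = some x := by
  cases a <;> simp [addPendant]

def addPendantHom (G : SimpleGraph V) (x : V) : G →g G.addPendant x :=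
  ⟨some, id⟩

variable {K : SimpleGraph W}

lemma HasMinor.of_addPendant (hK : ∀ w, ∃ w₁ w₂, w₁ ≠ w₂ ∧ K.Adj w w₁ ∧ K.Adj w w₂)
    (h : (G.addPendant x).HasMinor K) : G.HasMinor K := by
  obtain ⟨B, hne, hconn, hdisj, hedge⟩ := h
  have hx : ∀ w, none ∈ B w → some x ∈ B w := by
    intro w hw
    by_cases hB : ∃ z ∈ B w, z ≠ none
    · obtain ⟨z, hz, hzne⟩ := hB
      have : Nontrivial (B w) :=
        ⟨⟨⟨none, hw⟩, ⟨z, hz⟩, fun h => hzne (congrArg Subtype.val h).symm⟩⟩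
      obtain ⟨b, hb⟩ := (hconn w).preconnected.exists_adj_of_nontrivial ⟨none, hw⟩
      exact (addPendant_adj_none_left.1 (comap_adj.1 hb)) ▸ b.2
    · -- then `B w = {none}`, whose only outside neighbour `some x` lies in a single branch set
      push Not at hB
      obtain ⟨w₁, w₂, hw₁₂, hww₁, hww₂⟩ := hK w
      obtain ⟨a₁, ha₁, b₁, hb₁, hab₁⟩ := hedge w w₁ hww₁
      obtain ⟨a₂, ha₂, b₂, hb₂, hab₂⟩ := hedge w w₂ hww₂
      rw [hB a₁ ha₁, addPendant_adj_none_left] at hab₁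
      rw [hB a₂ ha₂, addPendant_adj_none_left] at hab₂
      subst hab₁ hab₂
      exact (Set.disjoint_left.1 (hdisj hw₁₂) hb₁ hb₂).elim
  refine ⟨fun w => some ⁻¹' B w, fun w => ?_, fun w => ?_,
    fun w₁ w₂ h => (hdisj h).preimage some, fun w₁ w₂ h => ?_⟩
  · obtain ⟨_ | a, ha⟩ := hne w
    exacts [⟨x, hx w ha⟩, ⟨a, ha⟩]
  · refine (hconn w).of_surjective_of_adj_or_eq
      (fun z => ⟨z.1.elim x id, ?_⟩) (fun a => ⟨⟨some a.1, a.2⟩, rfl⟩) ?_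
    · obtain ⟨_ | a, ha⟩ := z
      exacts [hx w ha, ha]
    · rintro ⟨_ | a, ha⟩ ⟨_ | b, hb⟩ hab <;> simp_all [Subtype.ext_iff]
  · obtain ⟨a, ha, b, hb, hab⟩ := hedge w₁ w₂ h
    rcases a with _ | a <;> rcases b with _ | b
    · exact (G.addPendant x).irrefl hab |>.elim
    · rw [addPendant_adj_none_left] at hab
      exact (Set.disjoint_left.1 (hdisj h.ne) (hx w₁ ha) (hab ▸ hb)).elim
    · rw [addPendant_adj_none_right] at hab
      exact (Set.disjoint_left.1 (hdisj h.ne) (hab ▸ ha) (hx w₂ hb)).elim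
    · exact ⟨a, ha, b, hb, hab⟩

lemma Planar.addPendant (h : G.Planar) : (G.addPendant x).Planar := by
  refine ⟨fun hK => h.1 (hK.of_addPendant ?_), fun hK => h.2 (hK.of_addPendant ?_)⟩
  · decide
  · rintro (i | j)
    · exact ⟨.inr 0, .inr 1, by decide, .inl ⟨rfl, rfl⟩, .inl ⟨rfl, rfl⟩⟩
    · exact ⟨.inl 0, .inl 1, by decide, .inr ⟨rfl, rfl⟩, .inr ⟨rfl, rfl⟩⟩

lemma Colorable.addPendant {n : ℕ} (h : G.Colorable n) (hn : 2 ≤ n) :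
    (G.addPendant x).Colorable n := by
  obtain ⟨c⟩ := h
  have : Nontrivial (Fin n) := Fin.nontrivial_iff_two_le.2 hn
  obtain ⟨i, hi⟩ := exists_ne (c x)
  refine ⟨.mk (fun z => z.elim i c) ?_⟩
  rintro (_ | a) (_ | b) hab
  · exact ((G.addPendant x).irrefl hab).elim
  · rw [addPendant_adj_none_left, Option.some_inj] at hab
    exact hab ▸ hi
  · rw [addPendant_adj_none_right, Option.some_inj] at hab
    exact hab ▸ hi.symm
  · exact c.valid hab

lemma identify_addPendant_isContained {G₀ : SimpleGraph V} {y : V} (hle : G₀ ≤ G)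
    (hxy : G.Adj x y) : (G₀.addPendant x).identify none (some y) ⊑ G := by
  refine ⟨Hom.toCopy ⟨fun z => z.1.get (Option.isSome_iff_ne_none.2 z.2), ?_⟩ ?_⟩
  · rintro ⟨_ | a, ha⟩ ⟨_ | b, hb⟩ ⟨-, hab⟩
    · exact (ha rfl).elim
    · exact (ha rfl).elim
    · exact (hb rfl).elim
    · simp only [addPendant_adj_some_some, addPendant_adj_none_left, Option.some_inj] at hab
      rcases hab with hab | ⟨rfl, rfl⟩ | ⟨rfl, rfl⟩
      exacts [hle hab, hxy.symm, hxy]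
  · rintro ⟨_ | a, ha⟩ ⟨_ | b, hb⟩ hab
    · exact (ha rfl).elim
    · exact (ha rfl).elim
    · exact (hb rfl).elim
    · simpa using hab

variable {n : ℕ}

lemma colorable_succ_of_colorable_induce_compl (x : V) (h : (G.induce {x}ᶜ).Colorable n) :
    G.Colorable (n + 1) := by
  classical
  obtain ⟨c⟩ := h
  refine ⟨.mk (fun a => if ha : a = x then Fin.last n else (c ⟨a, ha⟩).castSucc) ?_⟩
  intro a b hab
  by_cases ha : a = x <;> by_cases hb : b = x
  · exact (hab.ne (ha.trans hb.symm)).elim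
  · rw [dif_pos ha, dif_neg hb]
    exact (Fin.castSucc_lt_last _).ne'
  · rw [dif_neg ha, dif_pos hb]
    exact (Fin.castSucc_lt_last _).ne
  · rw [dif_neg ha, dif_neg hb, Ne, Fin.castSucc_inj]
    exact c.valid (show (G.induce {x}ᶜ).Adj ⟨a, ha⟩ ⟨b, hb⟩ from hab)

lemma colorable_succ_of_colorable_deleteEdges {y : V}
    (h : (G.deleteEdges {s(x, y)}).Colorable n) : G.Colorable (n + 1) := by
  refine colorable_succ_of_colorable_induce_compl x (h.of_hom ⟨fun a => a.1, ?_⟩)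
  rintro ⟨a, ha : a ≠ x⟩ ⟨b, hb : b ≠ x⟩ hab
  simpa [ha, hb] using hab

lemma eq_of_coloring_deleteEdges_of_not_colorable {y : V} (h : ¬ G.Colorable n)
    (c : (G.deleteEdges {s(x, y)}).Coloring (Fin n)) : c x = c y := by
  by_contra hxy
  refine h ⟨.mk c fun {a b} hab => ?_⟩
  by_cases hab' : s(a, b) = s(x, y)
  · rcases Sym2.eq_iff.1 hab' with ⟨rfl, rfl⟩ | ⟨rfl, rfl⟩
    exacts [hxy, Ne.symm hxy]
  · exact c.valid (by simpa [hab'] using hab)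

lemma exists_le_not_colorable_colorable_deleteEdges [Finite V] (hn : n ≠ 0)
    (h : ¬ G.Colorable n) : ∃ G' ≤ G, ∃ x y, G'.Adj x y ∧ ¬ G'.Colorable n ∧
      (G'.deleteEdges {s(x, y)}).Colorable n := by
  obtain ⟨G', hle, hmin⟩ :=
    exists_minimal_le_of_wellFoundedLT (fun G' => ¬ G'.Colorable n) G h
  obtain ⟨x, y, hxy⟩ : ∃ x y, G'.Adj x y := by
    by_contra! hno
    exact hmin.1 ((colorable_one_iff.2 (eq_bot_iff_forall_not_adj.2 hno)).mono
      (Nat.one_le_iff_ne_zero.2 hn))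
  have hlt : G'.deleteEdges {s(x, y)} < G' :=
    lt_of_le_of_ne (deleteEdges_le _) fun h => by rw [← h] at hxy; simp at hxy
  exact ⟨G', hle, x, y, hxy, hmin.1, not_not.1 (hmin.not_prop_of_lt hlt)⟩

section Identify

variable {u v : V}

open Classical in
noncomputable def identifyHom (huv : u ≠ v) (h : ¬ G.Adj u v) : G →g G.identify u v where
  toFun w := if hw : w = u then ⟨v, huv.symm⟩ else ⟨w, hw⟩
  map_rel' := by
    intro a b hab
    by_cases ha : a = u <;> by_cases hb : b = u
    · exact (hab.ne (ha.trans hb.symm)).elim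
    · rw [dif_pos ha, dif_neg hb]
      refine ⟨fun hvb => h ?_, .inr (.inl ⟨rfl, ha ▸ hab⟩)⟩
      obtain rfl : v = b := congrArg Subtype.val hvb
      exact ha ▸ hab
    · rw [dif_neg ha, dif_pos hb]
      refine ⟨fun hav => h ?_, .inr (.inr ⟨rfl, hb ▸ hab.symm⟩)⟩
      obtain rfl : a = v := congrArg Subtype.val hav
      exact hb ▸ hab.symm
    · rw [dif_neg ha, dif_neg hb]
      exact ⟨fun hab' => hab.ne (congrArg Subtype.val hab'), .inl hab⟩

lemma not_colorable_identify (huv : u ≠ v) (h : ¬ G.Adj u v)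
    (hsep : ∀ c : G.Coloring (Fin n), c u ≠ c v) : ¬ (G.identify u v).Colorable n := by
  rintro ⟨d⟩
  exact hsep (d.comp (identifyHom huv h)) (by simp [identifyHom]; rw [dif_neg huv.symm])

lemma Colorable.identify (huv : u ≠ v) (h : G.Colorable n) :
    (G.identify u v).Colorable (n + 1) := by
  refine colorable_succ_of_colorable_induce_compl ⟨v, huv.symm⟩
    (h.of_hom ⟨fun a => a.1.1, ?_⟩)
  rintro ⟨⟨a, ha⟩, ha'⟩ ⟨⟨b, hb⟩, hb'⟩ ⟨-, hab | ⟨hav, -⟩ | ⟨hbv, -⟩⟩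
  · exact hab
  · exact (ha' (Subtype.ext hav)).elim
  · exact (hb' (Subtype.ext hbv)).elim

end Identify

end SimpleGraph

open SimpleGraph

/-- There exists a 5-chromatic planar graph iff there exists a
4-chromatic planar graph `G` with nonadjacent vertices `u, v` forming an
implicit-edge such that the graph obtained by identifying `u` and `v` is planar. -/
theorem five_chromatic_planar_iff_implicit_edge :
    (∃ (V : Type) (_ : Fintype V) (G : SimpleGraph V),
        G.Planar ∧ G.chromaticNumber = 5) ↔
    (∃ (V : Type) (_ : Fintype V) (G : SimpleGraph V) (u v : V),
        G.Planar ∧ G.chromaticNumber = 4 ∧ u ≠ v ∧ ¬ G.Adj u v ∧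
        (∀ c : G.Coloring (Fin 4), c u ≠ c v) ∧
        (G.identify u v).Planar) := by
  constructor
  · rintro ⟨V, _, H, hH, hχ⟩
    have hH4 : ¬ H.Colorable 4 :=
      (chromaticNumber_eq_iff_colorable_not_colorable (n := 4).1 (by exact_mod_cast hχ)).2
    obtain ⟨G, hGH, x, y, hxy, hG4, hG₀4⟩ :=
      exists_le_not_colorable_colorable_deleteEdges (by norm_num) hH4
    set G₀ := G.deleteEdges {s(x, y)}
    have hG₀H : G₀ ≤ H := (deleteEdges_le _).trans hGH
    refine ⟨Option V, inferInstance, G₀.addPendant x, none, some y,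
      (hH.of_isContained (.of_le hG₀H)).addPendant, ?_, (Option.some_ne_none y).symm,
      by simpa using hxy.ne.symm, fun c => ?_, hH.of_isContained
        ((identify_addPendant_isContained (deleteEdges_le _) hxy).trans (.of_le hGH))⟩
    · refine chromaticNumber_eq_iff_colorable_not_colorable (n := 3).2
        ⟨hG₀4.addPendant (by norm_num), fun hP3 => hG4 ?_⟩
      exact colorable_succ_of_colorable_deleteEdges (hP3.of_hom (addPendantHom G₀ x))
    · have hxy_col : c (some x) = c (some y) :=
        eq_of_coloring_deleteEdges_of_not_colorable hG4 (c.comp (addPendantHom G₀ x))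
      exact hxy_col ▸ c.valid (addPendant_adj_none_left.2 rfl)
  · rintro ⟨V, _, G, u, v, -, hχ, huv, hadj, hsep, hplanar⟩
    classical
    have hG4 : G.Colorable 4 :=
      (chromaticNumber_eq_iff_colorable_not_colorable (n := 3).1 (by exact_mod_cast hχ)).1
    exact ⟨_, inferInstance, G.identify u v, hplanar,
      chromaticNumber_eq_iff_colorable_not_colorable (n := 4).2
        ⟨hG4.identify huv, not_colorable_identify huv hadj hsep⟩⟩
end
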